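/- arXiv:1811.07855 — 2 statements merged into one kernel-verified Lean document; each statement's English description precedes it below -/
import Mathlib

section
/- Let p ≥ 2 and p_0 ≥ 2 be real numbers and let ζ ∈ ℝ satisfy ζ^2 ≤ 2(p−1)/(p^2·(p_0−1)). Then for all real numbers a, b: 2·(|a|^{p−2}·a − |b|^{p−2}·b)·(a − b) ≥ 2(p_0−1)·ζ^2·(|a|^{p/2} − |b|^{p/2})^2 + 2^{2−p}·|a − b|^p. -/
/-!
For `x = |a|`, `y = |b|`, the product `(|a|^(p-2) a - |b|^(p-2) b)(a - b)` equals
`(x^(p-1) - y^(p-1))(x - y)` or `(x^(p-1) + y^(p-1))(x + y)`, according as `a` and `b` have equal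
or opposite signs. It therefore suffices to bound it below by `4(p-1)/p² (x^(p/2) - y^(p/2))²`,
which dominates the `ζ` term, and by `2^(2-p) |a - b|^p`.

The first bound is a Cauchy–Schwarz inequality: with `u = x^(p/2)`, `v = y^(p/2)`, `α = 2(p-1)/p`,
`β = 2/p`, it reads `αβ(u - v)² ≤ (u^α - v^α)(u^β - v^β)`. Since `α + β = 2`, integrating
`X² s^(α-1) + s^(β-1) - 2X = s^(β-1) (X s^(α-1) - 1)² ≥ 0` from `v` to `u` gives a quadratic in `X`
that is nonnegative, and its discriminant is the claim. The second bound is superadditivity,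
respectively convexity, of `t ↦ t^(p-1)`.
-/

open Real Set

namespace Real

lemma rpow_add_le_mul_rpow_add_rpow {x y q : ℝ} (hx : 0 ≤ x) (hy : 0 ≤ y) (hq : 1 ≤ q) :
    (x + y) ^ q ≤ 2 ^ (q - 1) * (x ^ q + y ^ q) := by
  lift x to NNReal using hx
  lift y to NNReal using hy
  exact_mod_cast NNReal.rpow_add_le_mul_rpow_add_rpow x y hq

lemma sub_rpow_le_rpow_sub_rpow {x y q : ℝ} (hy : 0 ≤ y) (hyx : y ≤ x) (hq : 1 ≤ q) :
    (x - y) ^ q ≤ x ^ q - y ^ q := by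
  have := add_rpow_le_rpow_add hy (sub_nonneg.2 hyx) hq
  rw [add_sub_cancel] at this
  linarith

lemma rpow_sub_one_mul_self {x p : ℝ} (hx : 0 ≤ x) (hp : p ≠ 0) : x ^ (p - 1) * x = x ^ p := by
  rw [← rpow_add_one' hx (by simpa using hp), sub_add_cancel]

end Real

section CauchySchwarz

variable {α β : ℝ}

lemma monotoneOn_sq_mul_rpow_div_add_rpow_div_sub_mul (hα : 0 < α) (hβ : 0 < β)
    (hαβ : α + β = 2) (x : ℝ) :
    MonotoneOn (fun s : ℝ ↦ x ^ 2 * s ^ α / α + s ^ β / β - 2 * x * s) (Ici 0) := by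
  refine monotoneOn_of_hasDerivWithinAt_nonneg (convex_Ici 0)
    (f' := fun s ↦ x ^ 2 * s ^ (α - 1) + s ^ (β - 1) - 2 * x) ?_ (fun s hs ↦ ?_) (fun s hs ↦ ?_)
  · have hcont : ∀ γ : ℝ, 0 < γ → Continuous fun s : ℝ ↦ s ^ γ := fun γ hγ ↦
      continuous_id.rpow_const fun _ ↦ Or.inr hγ.le
    exact ((((hcont α hα).const_smul (x ^ 2)).div_const α).add
      ((hcont β hβ).div_const β)).sub (continuous_const.mul continuous_id) |>.continuousOn
  · rw [interior_Ici] at hs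
    have hs0 : s ≠ 0 := (mem_Ioi.1 hs).ne'
    have h : HasDerivAt (fun s : ℝ ↦ x ^ 2 * s ^ α / α + s ^ β / β - 2 * x * s)
        (x ^ 2 * (α * s ^ (α - 1)) / α + β * s ^ (β - 1) / β - 2 * x * 1) s :=
      ((((hasDerivAt_rpow_const (Or.inl hs0)).const_mul _).div_const α).add
        ((hasDerivAt_rpow_const (Or.inl hs0)).div_const β)).sub ((hasDerivAt_id' s).const_mul _)
    exact (h.congr_deriv (by field_simp)).hasDerivWithinAt
  · rw [interior_Ici] at hs
    have hs0 : 0 < s := hs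
    have hprod : s ^ (α - 1) * s ^ (β - 1) = 1 := by
      rw [← rpow_add hs0, show α - 1 + (β - 1) = 0 by linarith, rpow_zero]
    have hsq : x ^ 2 * s ^ (α - 1) + s ^ (β - 1) - 2 * x =
        s ^ (β - 1) * (x * s ^ (α - 1) - 1) ^ 2 := by
      linear_combination (2 * x - x ^ 2 * s ^ (α - 1)) * hprod
    rw [hsq]
    positivity

lemma mul_mul_sub_sq_le_rpow_sub_mul_rpow_sub (hα : 0 < α) (hβ : 0 < β) (hαβ : α + β = 2)
    {u v : ℝ} (hu : 0 ≤ u) (hv : 0 ≤ v) :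
    α * β * (u - v) ^ 2 ≤ (u ^ α - v ^ α) * (u ^ β - v ^ β) := by
  wlog hvu : v ≤ u generalizing u v
  · convert this hv hu (le_of_not_ge hvu) using 1 <;> ring
  have hquad (x : ℝ) :
      0 ≤ (u ^ α - v ^ α) / α * (x * x) + -2 * (u - v) * x + (u ^ β - v ^ β) / β := by
    have := monotoneOn_sq_mul_rpow_div_add_rpow_div_sub_mul hα hβ hαβ x hv hu hvu
    linear_combination this
  have hdisc := discrim_le_zero hquad
  rw [discrim, mul_assoc, div_mul_div_comm] at hdisc
  rw [mul_comm, ← le_div_iff₀ (by positivity)]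
  linarith

end CauchySchwarz

section PowerEstimates

variable {p x y : ℝ}

lemma four_mul_sub_one_div_sq_mul_sq_le_rpow_sub_mul_sub (hp : 1 < p) (hx : 0 ≤ x) (hy : 0 ≤ y) :
    4 * (p - 1) / p ^ 2 * (x ^ (p / 2) - y ^ (p / 2)) ^ 2 ≤
      (x ^ (p - 1) - y ^ (p - 1)) * (x - y) := by
  have hp0 : 0 < p := by linarith
  have hp1 : 0 < p - 1 := by linarith
  have hpow {z : ℝ} (hz : 0 ≤ z) (γ : ℝ) : (z ^ (p / 2)) ^ (γ / p) = z ^ (γ / 2) := by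
    rw [← rpow_mul hz]
    congr 1
    field_simp
  have h := mul_mul_sub_sq_le_rpow_sub_mul_rpow_sub (α := 2 * (p - 1) / p) (β := 2 / p)
    (by positivity) (by positivity) (by field_simp; ring)
    (rpow_nonneg hx (p / 2)) (rpow_nonneg hy (p / 2))
  have hconst : 2 * (p - 1) / p * (2 / p) = 4 * (p - 1) / p ^ 2 := by
    field_simp
    ring
  rwa [hpow hx, hpow hy, hpow hx, hpow hy, hconst, mul_div_cancel_left₀ _ two_ne_zero,
    div_self two_ne_zero, rpow_one, rpow_one] at h

lemma four_mul_sub_one_div_sq_mul_sq_le_rpow_add_mul_add (hp : 1 < p) (hx : 0 ≤ x) (hy : 0 ≤ y) :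
    4 * (p - 1) / p ^ 2 * (x ^ (p / 2) - y ^ (p / 2)) ^ 2 ≤
      (x ^ (p - 1) + y ^ (p - 1)) * (x + y) := by
  have hsq {z : ℝ} (hz : 0 ≤ z) : (z ^ (p / 2)) ^ 2 = z ^ p := by
    rw [← rpow_natCast, ← rpow_mul hz]
    norm_num
  have hconst : 4 * (p - 1) / p ^ 2 ≤ 1 := by
    rw [div_le_one (by positivity)]
    nlinarith [sq_nonneg (p - 2)]
  calc 4 * (p - 1) / p ^ 2 * (x ^ (p / 2) - y ^ (p / 2)) ^ 2
      ≤ (x ^ (p / 2) - y ^ (p / 2)) ^ 2 :=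
        mul_le_of_le_one_left (sq_nonneg _) hconst
    _ ≤ (x ^ (p / 2)) ^ 2 + (y ^ (p / 2)) ^ 2 := by
        nlinarith [mul_nonneg (rpow_nonneg hx (p / 2)) (rpow_nonneg hy (p / 2))]
    _ = x ^ (p - 1) * x + y ^ (p - 1) * y := by
        rw [hsq hx, hsq hy, rpow_sub_one_mul_self hx (by positivity),
          rpow_sub_one_mul_self hy (by positivity)]
    _ ≤ (x ^ (p - 1) + y ^ (p - 1)) * (x + y) := by
        nlinarith [mul_nonneg (rpow_nonneg hx (p - 1)) hy, mul_nonneg (rpow_nonneg hy (p - 1)) hx]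

lemma two_rpow_two_sub_mul_abs_sub_rpow_le_rpow_sub_mul_sub (hp : 2 ≤ p) (hx : 0 ≤ x)
    (hy : 0 ≤ y) : 2 ^ (2 - p) * |x - y| ^ p ≤ (x ^ (p - 1) - y ^ (p - 1)) * (x - y) := by
  wlog hyx : y ≤ x generalizing x y
  · rw [abs_sub_comm]
    convert this hy hx (le_of_not_ge hyx) using 1
    ring
  have hxy : 0 ≤ x - y := sub_nonneg.2 hyx
  rw [abs_of_nonneg hxy, ← rpow_sub_one_mul_self hxy (by positivity)]
  have hsuper := sub_rpow_le_rpow_sub_rpow hy hyx (by linarith : 1 ≤ p - 1)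
  have hconst : (2 : ℝ) ^ (2 - p) ≤ 1 := rpow_le_one_of_one_le_of_nonpos one_le_two (by linarith)
  calc 2 ^ (2 - p) * ((x - y) ^ (p - 1) * (x - y)) ≤ (x - y) ^ (p - 1) * (x - y) :=
        mul_le_of_le_one_left (by positivity) hconst
    _ ≤ (x ^ (p - 1) - y ^ (p - 1)) * (x - y) := mul_le_mul_of_nonneg_right hsuper hxy

lemma two_rpow_two_sub_mul_add_rpow_le_rpow_add_mul_add (hp : 2 ≤ p) (hx : 0 ≤ x) (hy : 0 ≤ y) :
    2 ^ (2 - p) * (x + y) ^ p ≤ (x ^ (p - 1) + y ^ (p - 1)) * (x + y) := by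
  have hxy : 0 ≤ x + y := add_nonneg hx hy
  have hconvex := rpow_add_le_mul_rpow_add_rpow hx hy (by linarith : 1 ≤ p - 1)
  have htwo : (2 : ℝ) ^ (2 - p) * 2 ^ (p - 1 - 1) = 1 := by
    rw [← rpow_add two_pos, show 2 - p + (p - 1 - 1) = 0 by ring, rpow_zero]
  rw [← rpow_sub_one_mul_self hxy (by positivity)]
  calc 2 ^ (2 - p) * ((x + y) ^ (p - 1) * (x + y))
      ≤ 2 ^ (2 - p) * (2 ^ (p - 1 - 1) * (x ^ (p - 1) + y ^ (p - 1)) * (x + y)) := by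
        gcongr
    _ = (x ^ (p - 1) + y ^ (p - 1)) * (x + y) := by
        rw [← mul_assoc, ← mul_assoc, htwo, one_mul]

end PowerEstimates

lemma abs_rpow_sub_two_mul_sub_mul_sub_cases {p : ℝ} (hp : p ≠ 1) (a b : ℝ) :
    ((|a| ^ (p - 2) * a - |b| ^ (p - 2) * b) * (a - b) =
        (|a| ^ (p - 1) - |b| ^ (p - 1)) * (|a| - |b|) ∧ |a - b| = |(|a| - |b|)|) ∨
      ((|a| ^ (p - 2) * a - |b| ^ (p - 2) * b) * (a - b) =
        (|a| ^ (p - 1) + |b| ^ (p - 1)) * (|a| + |b|) ∧ |a - b| = |a| + |b|) := by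
  have hφ {z : ℝ} (hz : 0 ≤ z) : z ^ (p - 2) * z = z ^ (p - 1) := by
    rw [← rpow_sub_one_mul_self hz (sub_ne_zero.2 hp), sub_sub, one_add_one_eq_two]
  rcases le_total 0 a with ha | ha <;> rcases le_total 0 b with hb | hb
  · left
    simp only [abs_of_nonneg ha, abs_of_nonneg hb, hφ ha, hφ hb, and_self]
  · right
    rw [abs_of_nonneg ha, abs_of_nonpos hb, abs_of_nonneg (by linarith : 0 ≤ a - b)]
    constructor
    · linear_combination (a - b) * (hφ ha + hφ (neg_nonneg.2 hb))
    · ring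
  · right
    rw [abs_of_nonpos ha, abs_of_nonneg hb, abs_of_nonpos (by linarith : a - b ≤ 0)]
    constructor
    · linear_combination (b - a) * (hφ (neg_nonneg.2 ha) + hφ hb)
    · ring
  · left
    rw [abs_of_nonpos ha, abs_of_nonpos hb]
    refine ⟨?_, by rw [abs_sub_comm, neg_sub_neg]⟩
    linear_combination (b - a) * (hφ (neg_nonneg.2 ha) - hφ (neg_nonneg.2 hb))

lemma four_mul_sub_one_div_sq_mul_sq_le_abs_rpow_sub_two_mul_sub_mul_sub {p : ℝ} (hp : 1 < p)
    (a b : ℝ) :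
    4 * (p - 1) / p ^ 2 * (|a| ^ (p / 2) - |b| ^ (p / 2)) ^ 2 ≤
      (|a| ^ (p - 2) * a - |b| ^ (p - 2) * b) * (a - b) := by
  rcases abs_rpow_sub_two_mul_sub_mul_sub_cases hp.ne' a b with ⟨hS, -⟩ | ⟨hS, -⟩ <;> rw [hS]
  · exact four_mul_sub_one_div_sq_mul_sq_le_rpow_sub_mul_sub hp (abs_nonneg a) (abs_nonneg b)
  · exact four_mul_sub_one_div_sq_mul_sq_le_rpow_add_mul_add hp (abs_nonneg a) (abs_nonneg b)

lemma two_rpow_two_sub_mul_abs_sub_rpow_le_abs_rpow_sub_two_mul_sub_mul_sub {p : ℝ} (hp : 2 ≤ p)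
    (a b : ℝ) :
    2 ^ (2 - p) * |a - b| ^ p ≤ (|a| ^ (p - 2) * a - |b| ^ (p - 2) * b) * (a - b) := by
  rcases abs_rpow_sub_two_mul_sub_mul_sub_cases (by linarith : p ≠ 1) a b with
    ⟨hS, hab⟩ | ⟨hS, hab⟩ <;> rw [hS, hab]
  · exact two_rpow_two_sub_mul_abs_sub_rpow_le_rpow_sub_mul_sub hp (abs_nonneg a) (abs_nonneg b)
  · exact two_rpow_two_sub_mul_add_rpow_le_rpow_add_mul_add hp (abs_nonneg a) (abs_nonneg b)

theorem p_laplace_strong_monotonicity_general (p p₀ ζ : ℝ) (hp : 2 ≤ p)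
    (hζ : ζ ^ 2 ≤ 2 * (p - 1) / (p ^ 2 * (p₀ - 1))) (a b : ℝ) :
    2 * ((|a| ^ (p - 2) * a - |b| ^ (p - 2) * b) * (a - b)) ≥
      2 * (p₀ - 1) * ζ ^ 2 * (|a| ^ (p / 2) - |b| ^ (p / 2)) ^ 2 +
        (2 : ℝ) ^ (2 - p) * |a - b| ^ p := by
  have hconst : 2 * (p₀ - 1) * ζ ^ 2 ≤ 4 * (p - 1) / p ^ 2 := by
    rcases le_or_gt p₀ 1 with hp₀ | hp₀
    · have : 2 * (p₀ - 1) * ζ ^ 2 ≤ 0 :=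
        mul_nonpos_of_nonpos_of_nonneg (by linarith) (sq_nonneg ζ)
      have : 0 ≤ 4 * (p - 1) / p ^ 2 := div_nonneg (by linarith) (sq_nonneg p)
      linarith
    · calc 2 * (p₀ - 1) * ζ ^ 2 ≤ 2 * (p₀ - 1) * (2 * (p - 1) / (p ^ 2 * (p₀ - 1))) := by gcongr
        _ = 4 * (p - 1) / p ^ 2 := by field_simp; ring
  have hsq := four_mul_sub_one_div_sq_mul_sq_le_abs_rpow_sub_two_mul_sub_mul_sub
    (by linarith : 1 < p) a b
  have hpow := two_rpow_two_sub_mul_abs_sub_rpow_le_abs_rpow_sub_two_mul_sub_mul_sub hp a b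
  have hζsq := mul_le_mul_of_nonneg_right hconst (sq_nonneg (|a| ^ (p / 2) - |b| ^ (p / 2)))
  linarith

/-- For `p ≥ 2`, `p₀ ≥ 2` and `ζ² ≤ 2(p−1)/(p²(p₀−1))`, for all `a b : ℝ`:
`2(|a|^{p−2}a − |b|^{p−2}b)(a − b) ≥ 2(p₀−1)ζ²(|a|^{p/2} − |b|^{p/2})² + 2^{2−p}|a−b|^p`. -/
theorem p_laplace_strong_monotonicity (p p₀ ζ : ℝ) (hp : 2 ≤ p) (hp₀ : 2 ≤ p₀)
    (hζ : ζ ^ 2 ≤ 2 * (p - 1) / (p ^ 2 * (p₀ - 1))) (a b : ℝ) :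
    2 * ((|a| ^ (p - 2) * a - |b| ^ (p - 2) * b) * (a - b)) ≥
      2 * (p₀ - 1) * ζ ^ 2 * (|a| ^ (p / 2) - |b| ^ (p / 2)) ^ 2 +
        (2 : ℝ) ^ (2 - p) * |a - b| ^ p :=
  p_laplace_strong_monotonicity_general p p₀ ζ hp hζ a b
end

section
/- Let k be a positive integer and, for each i = 1, …, k, let V_i be a real normed space, x_i ∈ V_i an element, and A_i a continuous linear functional on V_i. Let α_i > 1 (i = 1, …, k), β ≥ 0, p_0 ≥ β + 2, θ > 0, K ≥ 0, f ≥ 0 and h ≥ 0 be real numbers, and let S ≥ 0 and G ≥ 0 be real numbers. Assume: (growth) ‖A_i‖_{V_i*}^{α_i/(α_i−1)} ≤ (f + K·‖x_i‖_{V_i}^{α_i})·(1 + h^β) for each i; (coercivity) 2·∑_{i=1}^k A_i(x_i) + (p_0 − 1)·S + θ·∑_{i=1}^k ‖x_i‖_{V_i}^{α_i} + G ≤ f + K·h^2. Then there exists a constant C, depending only on k, α_1, …, α_k, β, θ, K and p_0, such that S + G ≤ C·( 1 + f^{p_0/2} + h^{p_0} + ∑_{i=1}^k ‖x_i‖_{V_i}^{α_i}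 + h^β·∑_{i=1}^k ‖x_i‖_{V_i}^{α_i} ). -/
/-! Young's inequality with the exponents `αᵢ / (αᵢ - 1)` and `αᵢ` turns the growth bound into
`-∑ Aᵢ(xᵢ) ≤ k f (1 + h^β) + (K (1 + h^β) + 1) ∑ ‖xᵢ‖^{αᵢ}`, and inserting this into the
coercivity inequality bounds `S + G`. The mixed terms are absorbed because `f ≤ 1 + f^{p₀/2}`,
`h² ≤ 1 + h^{p₀}` and `f h^β ≤ 1 + f^{p₀/2} + h^{p₀}`; for the last one compare `f` with
`h²`. -/

namespace Real

theorem rpow_le_one_add_rpow_of_le {h m n : ℝ} (hh : 0 ≤ h) (hm : 0 ≤ m) (hmn : m ≤ n) :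
    h ^ m ≤ 1 + h ^ n := by
  rcases le_or_gt h 1 with h1 | h1
  · linarith [rpow_le_one hh h1 hm, rpow_nonneg hh n]
  · linarith [rpow_le_rpow_of_exponent_le h1.le hmn]

theorem mul_le_rpow_add_rpow {a b p q : ℝ} (ha : 0 ≤ a) (hb : 0 ≤ b)
    (hpq : p.HolderConjugate q) : a * b ≤ a ^ p + b ^ q := by
  have hp : 1 ≤ p := hpq.lt.le
  have hq : 1 ≤ q := hpq.symm.lt.le
  calc a * b ≤ a ^ p / p + b ^ q / q := young_inequality_of_nonneg ha hb hpq
    _ ≤ a ^ p + b ^ q := by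
      gcongr
      · exact div_le_self (rpow_nonneg ha p) hp
      · exact div_le_self (rpow_nonneg hb q) hq

theorem mul_rpow_le_one_add_rpow_add_rpow {f h β p : ℝ} (hf : 0 ≤ f) (hh : 0 ≤ h)
    (hβ : 0 ≤ β) (hp : β + 2 ≤ p) :
    f * h ^ β ≤ 1 + f ^ (p / 2) + h ^ p := by
  rcases le_total f (h ^ (2 : ℝ)) with hfh | hhf
  · calc f * h ^ β ≤ h ^ (2 : ℝ) * h ^ β := by gcongr
      _ = h ^ (2 + β) := (rpow_add' hh (by positivity)).symm
      _ ≤ 1 + h ^ p := rpow_le_one_add_rpow_of_le hh (by positivity) (by linarith)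
      _ ≤ 1 + f ^ (p / 2) + h ^ p := by linarith [rpow_nonneg hf (p / 2)]
  · calc f * h ^ β = f * (h ^ (2 : ℝ)) ^ (β / 2) := by rw [← rpow_mul hh]; ring_nf
      _ ≤ f ^ (1 : ℝ) * f ^ (β / 2) := by rw [rpow_one]; gcongr
      _ = f ^ (1 + β / 2) := (rpow_add' hf (by positivity)).symm
      _ ≤ 1 + f ^ (p / 2) := rpow_le_one_add_rpow_of_le hf (by positivity) (by linarith)
      _ ≤ 1 + f ^ (p / 2) + h ^ p := by linarith [rpow_nonneg hh p]

end Real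

theorem ContinuousLinearMap.abs_apply_le_opNorm_rpow_add_norm_rpow {V : Type*}
    [SeminormedAddCommGroup V] [NormedSpace ℝ V] (A : V →L[ℝ] ℝ) (x : V) {α : ℝ} (hα : 1 < α) :
    |A x| ≤ ‖A‖ ^ (α / (α - 1)) + ‖x‖ ^ α :=
  calc |A x| ≤ ‖A‖ * ‖x‖ := A.le_opNorm x
    _ ≤ ‖A‖ ^ (α / (α - 1)) + ‖x‖ ^ α :=
      Real.mul_le_rpow_add_rpow (norm_nonneg _) (norm_nonneg _)
        (Real.HolderConjugate.conjExponent hα).symm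

theorem neg_sum_apply_le_of_opNorm_rpow_le {ι : Type*} [Fintype ι] {V : ι → Type*}
    [∀ i, SeminormedAddCommGroup (V i)] [∀ i, NormedSpace ℝ (V i)]
    (x : ∀ i, V i) (A : ∀ i, V i →L[ℝ] ℝ) {α : ι → ℝ} (hα : ∀ i, 1 < α i) {f K c : ℝ}
    (hgrowth : ∀ i, ‖A i‖ ^ (α i / (α i - 1)) ≤ (f + K * ‖x i‖ ^ α i) * c) :
    -(∑ i, A i (x i)) ≤ Fintype.card ι * f * c + (K * c + 1) * ∑ i, ‖x i‖ ^ α i :=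
  calc -(∑ i, A i (x i)) ≤ ∑ i, |A i (x i)| := by
        rw [← Finset.sum_neg_distrib]; exact Finset.sum_le_sum fun i _ => neg_le_abs _
    _ ≤ ∑ i, ((f + K * ‖x i‖ ^ α i) * c + ‖x i‖ ^ α i) := Finset.sum_le_sum fun i _ =>
        ((A i).abs_apply_le_opNorm_rpow_add_norm_rpow (x i) (hα i)).trans
          (by gcongr; exact hgrowth i)
    _ = ∑ i, (f * c + (K * c + 1) * ‖x i‖ ^ α i) := Finset.sum_congr rfl fun i _ => by ring
    _ = Fintype.card ι * f * c + (K * c + 1) * ∑ i, ‖x i‖ ^ α i := by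
        rw [Finset.sum_add_distrib, Finset.sum_const, ← Finset.mul_sum, Finset.card_univ,
          nsmul_eq_mul, mul_assoc]

theorem diffusion_bound_of_coercivity_general (k : ℕ)
    (α : Fin k → ℝ) (hα : ∀ i, 1 < α i) (β θ K p₀ : ℝ)
    (hβ : 0 ≤ β) (hp₀ : β + 2 ≤ p₀) (hθ : 0 < θ) (hK : 0 ≤ K) :
    ∃ C : ℝ, ∀ (V : Fin k → Type*) [∀ i, NormedAddCommGroup (V i)]
      [∀ i, NormedSpace ℝ (V i)]
      (x : ∀ i, V i) (A : ∀ i, V i →L[ℝ] ℝ) (f h S G : ℝ),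
      0 ≤ f → 0 ≤ h → 0 ≤ S → 0 ≤ G →
      (∀ i, ‖A i‖ ^ (α i / (α i - 1)) ≤ (f + K * ‖x i‖ ^ (α i)) * (1 + h ^ β)) →
      2 * (∑ i, (A i) (x i)) + (p₀ - 1) * S + θ * (∑ i, ‖x i‖ ^ (α i)) + G ≤
        f + K * h ^ (2 : ℝ) →
      S + G ≤ C * (1 + f ^ (p₀ / 2) + h ^ p₀ + (∑ i, ‖x i‖ ^ (α i)) +
        h ^ β * ∑ i, ‖x i‖ ^ (α i)) := by
  refine ⟨4 * k + 2 * K + 2, fun V _ _ x A f h S G hf hh hS _ hgrowth hcoer => ?_⟩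
  set X := ∑ i, ‖x i‖ ^ α i
  have hX : 0 ≤ X := Finset.sum_nonneg fun i _ => Real.rpow_nonneg (norm_nonneg _) _
  have hb : 0 ≤ h ^ β := Real.rpow_nonneg hh β
  have hF : 0 ≤ f ^ (p₀ / 2) := Real.rpow_nonneg hf _
  have hH : 0 ≤ h ^ p₀ := Real.rpow_nonneg hh _
  have hk : (0 : ℝ) ≤ k := k.cast_nonneg
  have hpair := neg_sum_apply_le_of_opNorm_rpow_le x A hα hgrowth
  rw [Fintype.card_fin] at hpair
  have hfF : f ≤ 1 + f ^ (p₀ / 2) := by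
    simpa using Real.rpow_le_one_add_rpow_of_le hf zero_le_one (by linarith : (1 : ℝ) ≤ p₀ / 2)
  have hfb := Real.mul_rpow_le_one_add_rpow_add_rpow hf hh hβ hp₀
  have hhH : h ^ (2 : ℝ) ≤ 1 + h ^ p₀ :=
    Real.rpow_le_one_add_rpow_of_le hh zero_le_two (by linarith)
  calc S + G
      ≤ f + K * h ^ (2 : ℝ) + 2 * (k * f * (1 + h ^ β) + (K * (1 + h ^ β) + 1) * X) := by
        linarith [mul_nonneg hθ.le hX, mul_nonneg hS (by linarith : 0 ≤ p₀ - 2)]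
    _ ≤ _ := by
        linarith [mul_le_mul_of_nonneg_left hfF hk, mul_le_mul_of_nonneg_left hfb hk,
          mul_le_mul_of_nonneg_left hhH hK, mul_nonneg hK hX, mul_nonneg hK (mul_nonneg hb hX),
          mul_nonneg hK hF, mul_nonneg hK hH, mul_nonneg hk hF, mul_nonneg hk hH,
          mul_nonneg hk hX, mul_nonneg hk (mul_nonneg hb hX), mul_nonneg hb hX]

/-- Under the growth conditions on `A_i` and the `p₀`-stochastic coercivity
condition, the quantities `S` (the sum of squared norms of the diffusion
coefficients) and `G` (the jump term) satisfy
`S + G ≤ C(1 + f^{p₀/2} + h^{p₀} + ∑ᵢ‖xᵢ‖^{αᵢ} + h^β ∑ᵢ‖xᵢ‖^{αᵢ})`, where `C`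
depends only on `k`, `α₁,…,α_k`, `β`, `θ`, `K` and `p₀`. -/
theorem diffusion_bound_of_coercivity (k : ℕ) (hk : 0 < k)
    (α : Fin k → ℝ) (hα : ∀ i, 1 < α i) (β θ K p₀ : ℝ)
    (hβ : 0 ≤ β) (hp₀ : β + 2 ≤ p₀) (hθ : 0 < θ) (hK : 0 ≤ K) :
    ∃ C : ℝ, ∀ (V : Fin k → Type*) [∀ i, NormedAddCommGroup (V i)]
      [∀ i, NormedSpace ℝ (V i)]
      (x : ∀ i, V i) (A : ∀ i, V i →L[ℝ] ℝ) (f h S G : ℝ),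
      0 ≤ f → 0 ≤ h → 0 ≤ S → 0 ≤ G →
      (∀ i, ‖A i‖ ^ (α i / (α i - 1)) ≤ (f + K * ‖x i‖ ^ (α i)) * (1 + h ^ β)) →
      2 * (∑ i, (A i) (x i)) + (p₀ - 1) * S + θ * (∑ i, ‖x i‖ ^ (α i)) + G ≤
        f + K * h ^ (2 : ℝ) →
      S + G ≤ C * (1 + f ^ (p₀ / 2) + h ^ p₀ + (∑ i, ‖x i‖ ^ (α i)) +
        h ^ β * ∑ i, ‖x i‖ ^ (α i)) :=
  diffusion_bound_of_coercivity_general k α hα β θ K p₀ hβ hp₀ hθ hK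
end
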